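/- arXiv:1208.5878 — 3 statements merged into one kernel-verified Lean document; each statement's English description precedes it below -/
import Mathlib

section
/- Let p, q, k, i, m, s be positive integers with 0 ≤ s < p, and let d = gcd(p+q, k). If i·q + (i-1)·p = m·k - s, then d divides p - s; consequently, if d > p, no such i, m, s can exist with 0 ≤ s < p (since then 0 < p - s < d would be divisible by d). -/
theorem Int.gcd_add_dvd_sub_of_mul_add_eq (p q k i m s : ℤ)
    (heq : i * q + (i - 1) * p = m * k - s) : (Int.gcd (p + q) k : ℤ) ∣ p - s := by
  have hps : p - s = i * (p + q) - m * k := by linear_combination -heq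
  rw [hps]
  exact dvd_sub ((Int.gcd_dvd_left _ _).mul_left i) ((Int.gcd_dvd_right _ _).mul_left m)

theorem stmt_0_general (p q k i m s : ℤ) (hs0 : 0 ≤ s) (hsp : s < p)
    (heq : i * q + (i - 1) * p = m * k - s) :
    ((Int.gcd (p + q) k : ℤ) ∣ (p - s)) ∧
      ((p < (Int.gcd (p + q) k : ℤ)) → False) := by
  have hdvd := Int.gcd_add_dvd_sub_of_mul_add_eq p q k i m s heq
  refine ⟨hdvd, fun hlt => ?_⟩
  have hle := Int.le_of_dvd (sub_pos.mpr hsp) hdvd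
  omega

theorem stmt_0 (p q k i m s : ℤ) (hp : 0 < p) (hq : 0 < q) (hk : 0 < k)
    (hi : 0 < i) (hm : 0 < m) (hs0 : 0 ≤ s) (hsp : s < p)
    (heq : i * q + (i - 1) * p = m * k - s) :
    ((Int.gcd (p + q) k : ℤ) ∣ (p - s)) ∧
      ((p < (Int.gcd (p + q) k : ℤ)) → False) :=
  stmt_0_general p q k i m s hs0 hsp heq
end

section
/- Let p, q be positive integers and define N(k) = (q+1)·(⌈q/p⌉+3)^(k-1) for k ≥ 1. Then for every integer k ≥ 2 with k ≤ p: (N(k) - N(k-1))·k·(p-k+1)/(q+k-1) > N(k-1)·(1 + p/(q+p)). -/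
noncomputable def Nstrict (p q : ℕ) (j : ℕ) : ℝ :=
  ((q : ℝ) + 1) * ((⌈(q : ℝ) / (p : ℝ)⌉ : ℝ) + 3) ^ (j - 1)

theorem stmt_4 (p q k : ℕ) (hp : 0 < p) (hq : 0 < q) (hk : 2 ≤ k) (hkp : k ≤ p) :
    (Nstrict p q k - Nstrict p q (k - 1)) * (k : ℝ) * ((p : ℝ) - (k : ℝ) + 1)
        / ((q : ℝ) + (k : ℝ) - 1)
      > Nstrict p q (k - 1) * (1 + (p : ℝ) / ((q : ℝ) + (p : ℝ))) := by
  obtain ⟨C, hCdef⟩ : ∃ C : ℝ, C = (⌈(q : ℝ) / (p : ℝ)⌉ : ℝ) + 3 := ⟨_, rfl⟩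
  have hP : (0:ℝ) < p := by exact_mod_cast hp
  have hQ : (0:ℝ) < q := by exact_mod_cast hq
  have hK2 : (2:ℝ) ≤ k := by exact_mod_cast hk
  have hKP : (k:ℝ) ≤ p := by exact_mod_cast hkp
  have hdiv : (0:ℝ) < (q:ℝ)/(p:ℝ) := div_pos hQ hP
  have hceil : (q:ℝ)/(p:ℝ) ≤ (⌈(q : ℝ) / (p : ℝ)⌉ : ℝ) := Int.le_ceil _
  have hCq : (q:ℝ)/(p:ℝ) + 3 ≤ C := by rw [hCdef]; linarith
  have hCpos : (0:ℝ) < C := by linarith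
  have hC1 : (0:ℝ) < C - 1 := by linarith
  have hPC : (q:ℝ) + 3*p ≤ p * C := by
    have h1 : (p:ℝ) * ((q:ℝ)/(p:ℝ) + 3) ≤ p * C := mul_le_mul_of_nonneg_left hCq hP.le
    have h2 : (p:ℝ) * ((q:ℝ)/(p:ℝ)) = q := by field_simp
    nlinarith
  have hk1 : k - 1 = (k - 2) + 1 := by omega
  have hNk : Nstrict p q k = ((q:ℝ)+1) * C ^ (k-2) * C := by
    rw [Nstrict, ← hCdef, hk1, pow_succ]; ring
  have hNk1 : Nstrict p q (k-1) = ((q:ℝ)+1) * C ^ (k-2) := by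
    have h : k - 1 - 1 = k - 2 := by omega
    rw [Nstrict, ← hCdef, h]
  set A : ℝ := ((q:ℝ)+1) * C ^ (k-2) with hAdef
  have hA : 0 < A := by positivity
  have hD1 : (0:ℝ) < (q:ℝ) + k - 1 := by linarith
  have hD2 : (0:ℝ) < (q:ℝ) + p := by linarith
  rw [gt_iff_lt, lt_div_iff₀ hD1, hNk, hNk1]
  have hrw : (1 + (p : ℝ) / ((q : ℝ) + (p : ℝ))) = ((q:ℝ) + 2*(p:ℝ)) / ((q:ℝ)+(p:ℝ)) := by
    field_simp; ring
  rw [hrw, show A * (((q:ℝ) + 2*(p:ℝ)) / ((q:ℝ)+(p:ℝ))) * ((q:ℝ) + (k:ℝ) - 1)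
      = A * ((q:ℝ) + 2*(p:ℝ)) * ((q:ℝ) + (k:ℝ) - 1) / ((q:ℝ)+(p:ℝ)) from by ring,
    div_lt_iff₀ hD2]
  have hKPk : (p:ℝ) ≤ (k:ℝ) * ((p:ℝ) - k + 1) := by
    nlinarith [mul_nonneg (by linarith : (0:ℝ) ≤ (k:ℝ)-1) (by linarith : (0:ℝ) ≤ (p:ℝ)-k)]
  have h4 : (q:ℝ) + 2*(p:ℝ) ≤ (C-1) * p := by nlinarith
  have h3 : (q:ℝ) + 2*(p:ℝ) ≤ (C-1) * ((k:ℝ) * ((p:ℝ)-k+1)) :=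
    h4.trans (mul_le_mul_of_nonneg_left hKPk hC1.le)
  have hD12 : (q:ℝ) + (k:ℝ) - 1 < (q:ℝ) + p := by linarith
  have hq2p : (0:ℝ) < (q:ℝ) + 2*(p:ℝ) := by linarith
  calc A * ((q:ℝ) + 2*(p:ℝ)) * ((q:ℝ) + (k:ℝ) - 1)
      < A * ((q:ℝ) + 2*(p:ℝ)) * ((q:ℝ) + (p:ℝ)) :=
        mul_lt_mul_of_pos_left hD12 (mul_pos hA hq2p)
    _ ≤ A * ((C-1) * ((k:ℝ) * ((p:ℝ)-k+1))) * ((q:ℝ) + (p:ℝ)) := by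
        apply mul_le_mul_of_nonneg_right _ hD2.le
        exact mul_le_mul_of_nonneg_left h3 hA.le
    _ = (A * C - A) * (k:ℝ) * ((p:ℝ) - (k:ℝ) + 1) * ((q:ℝ) + (p:ℝ)) := by ring
end

section
/- Let p, q, k be positive integers with q ≥ k·p and k ≥ p+2, and define N(k) = (q-p)·(q/(k·p) + 1)^(k-p-1) (a real number). Then p + N(k)/(q/(k·p) + 1) ≤ N(k-1), where N(k-1) = (q-p)·(q/((k-1)·p)+1)^{k-p-2} for k > p+2 and N(p+1) = q. -/
/-!
With `B(j) = q / (j p) + 1` we have `N(k) / B(k) = (q - p) B(k)^n`, `n = k - p - 2`. For `k = p + 2`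
the claim is the identity `p + (q - p) = q`. For `k > p + 2` it reads
`p ≤ (q - p) (B(k-1)^n - B(k)^n)`; since `1 ≤ B(k) ≤ B(k-1)` and `n ≥ 1`, the difference of powers
dominates `B(k-1) - B(k) = q / (k (k-1) p)`, and `(q - p) q ≥ (k-1) p · k p` because `q ≥ k p`.
-/

noncomputable def Nmon (p q : ℕ) (j : ℕ) : ℝ :=
  if j = p + 1 then (q : ℝ)
  else ((q : ℝ) - (p : ℝ)) * ((q : ℝ) / ((j : ℝ) * (p : ℝ)) + 1) ^ (j - p - 1)

-- For `1 ≤ b ≤ a`, `a ^ n - b ^ n` is monotone in `n`.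
theorem sub_le_pow_sub_pow {R : Type*} [CommRing R] [LinearOrder R] [IsStrictOrderedRing R]
    {a b : R} (hb : 1 ≤ b) (hba : b ≤ a) {n : ℕ} (hn : 1 ≤ n) :
    a - b ≤ a ^ n - b ^ n := by
  induction n, hn using Nat.le_induction with
  | base => simp
  | succ n _ ih =>
    have hbn : b ^ n ≤ a ^ n := pow_le_pow_left₀ (by linarith) hba n
    have hstep : b ^ n * (b - 1) ≤ a ^ n * (a - 1) :=
      mul_le_mul hbn (by linarith) (by linarith) (by linarith [one_le_pow₀ hb (n := n)])
    calc a - b ≤ a ^ n - b ^ n := ih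
      _ ≤ a ^ (n + 1) - b ^ (n + 1) := by rw [pow_succ, pow_succ]; linarith

theorem le_mul_div_sub_div {p q k : ℝ} (hp : 0 < p) (hk : 1 < k) (hq : k * p ≤ q) :
    p ≤ (q - p) * (q / ((k - 1) * p) - q / (k * p)) := by
  have hk₀ : k - 1 ≠ 0 := by linarith
  have hdiff : q / ((k - 1) * p) - q / (k * p) = q / ((k - 1) * k * p) := by
    field_simp
    ring
  rw [hdiff, ← mul_div_assoc, le_div_iff₀ (by positivity)]
  calc p * ((k - 1) * k * p) = (k - 1) * p * (k * p) := by ring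
    _ ≤ (q - p) * q := mul_le_mul (by nlinarith) hq (by positivity) (by nlinarith)

noncomputable def nmonBase (p q j : ℕ) : ℝ := q / (j * p) + 1

theorem Nmon_self_add_one (p q : ℕ) : Nmon p q (p + 1) = q := if_pos rfl

theorem Nmon_of_ne {p q j : ℕ} (hj : j ≠ p + 1) :
    Nmon p q j = (q - p) * nmonBase p q j ^ (j - p - 1) := if_neg hj

theorem one_le_nmonBase (p q j : ℕ) : 1 ≤ nmonBase p q j :=
  le_add_of_nonneg_left (by positivity)

theorem nmonBase_le_of_le {p q i j : ℕ} (hp : 0 < p) (hj : 0 < j) (hji : j ≤ i) :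
    nmonBase p q i ≤ nmonBase p q j := by
  unfold nmonBase
  gcongr

theorem Nmon_div_nmonBase {p q k : ℕ} (hk : p + 2 ≤ k) :
    Nmon p q k / nmonBase p q k = (q - p) * nmonBase p q k ^ (k - p - 2) := by
  have hB : nmonBase p q k ≠ 0 := (zero_lt_one.trans_le (one_le_nmonBase p q k)).ne'
  rw [Nmon_of_ne (by omega), show k - p - 1 = k - p - 2 + 1 by omega, pow_succ,
    ← mul_assoc, mul_div_cancel_right₀ _ hB]

theorem le_mul_nmonBase_pred_sub {p q k : ℕ} (hp : 0 < p) (hk : 2 ≤ k) (hq : k * p ≤ q) :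
    (p : ℝ) ≤ (q - p) * (nmonBase p q (k - 1) - nmonBase p q k) := by
  have h := le_mul_div_sub_div (p := p) (q := q) (k := k) (by exact_mod_cast hp)
    (by exact_mod_cast hk) (by exact_mod_cast hq)
  unfold nmonBase
  rw [Nat.cast_pred (by omega)]
  linarith

theorem stmt_8_general (p q k : ℕ) (hp : 0 < p)
    (hqkp : k * p ≤ q) (hkp : p + 2 ≤ k) :
    (p : ℝ) + Nmon p q k / ((q : ℝ) / ((k : ℝ) * (p : ℝ)) + 1) ≤ Nmon p q (k - 1) := by
  change (p : ℝ) + Nmon p q k / nmonBase p q k ≤ Nmon p q (k - 1)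
  rw [Nmon_div_nmonBase hkp]
  rcases hkp.eq_or_lt with rfl | hlt
  · rw [show p + 2 - 1 = p + 1 by omega, Nmon_self_add_one, show p + 2 - p - 2 = 0 by omega,
      pow_zero, mul_one, add_sub_cancel]
  · rw [Nmon_of_ne (by omega), show k - 1 - p - 1 = k - p - 2 by omega]
    set A := nmonBase p q (k - 1)
    set B := nmonBase p q k
    have hqp : (0 : ℝ) ≤ q - p :=
      sub_nonneg.2 (by exact_mod_cast (Nat.le_mul_of_pos_left p (by omega)).trans hqkp)
    have hpow : A - B ≤ A ^ (k - p - 2) - B ^ (k - p - 2) :=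
      sub_le_pow_sub_pow (one_le_nmonBase p q k) (nmonBase_le_of_le hp (by omega) (Nat.sub_le k 1))
        (by omega)
    calc (p : ℝ) + (q - p) * B ^ (k - p - 2)
        ≤ (q - p) * (A - B) + (q - p) * B ^ (k - p - 2) := by
          gcongr
          exact le_mul_nmonBase_pred_sub hp (by omega) hqkp
      _ ≤ (q - p) * (A ^ (k - p - 2) - B ^ (k - p - 2)) + (q - p) * B ^ (k - p - 2) := by gcongr
      _ = (q - p) * A ^ (k - p - 2) := by ring

theorem stmt_8 (p q k : ℕ) (hp : 0 < p) (hq : 0 < q) (hk : 0 < k)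
    (hqkp : k * p ≤ q) (hkp : p + 2 ≤ k) :
    (p : ℝ) + Nmon p q k / ((q : ℝ) / ((k : ℝ) * (p : ℝ)) + 1) ≤ Nmon p q (k - 1) :=
  stmt_8_general p q k hp hqkp hkp
end
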